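/- arXiv:2605.16096 — 2 statements merged into one kernel-verified Lean document; each statement's English description precedes it below -/
import Mathlib

section
/- Let X be a median algebra (a set with a ternary operation m that is symmetric, satisfies m(a,b,b)=b, and m(m(a,b,d),c,d)=m(m(a,c,d),b,d)). Then for every triple x,y,z in X, the intersection of the three intervals [x,y], [y,z], [x,z] is exactly the singleton {m(x,y,z)}, where [a,b] := {c : m(a,c,b)=c}. -/
/-- A median algebra: a set with a ternary operation `m` that is symmetric
(generated by the two transpositions), satisfies `m a b b = b`, and
`m (m a b d) c d = m (m a c d) b d`. -/
structure MedianAlgebra (X : Type*) where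
  m : X → X → X → X
  swap12 : ∀ a b c, m a b c = m b a c
  swap23 : ∀ a b c, m a b c = m a c b
  absorb : ∀ a b, m a b b = b
  med_assoc : ∀ a b c d, m (m a b d) c d = m (m a c d) b d

namespace MedianAlgebra

variable {X : Type*}

/-- The median interval `[a,b] = {c : m a c b = c}`. -/
def interval (M : MedianAlgebra X) (a b : X) : Set X := {c | M.m a c b = c}

/-- A subset is convex if it contains the interval between any two of its points. -/
def IsConvex (M : MedianAlgebra X) (C : Set X) : Prop :=
  ∀ x ∈ C, ∀ y ∈ C, M.interval x y ⊆ C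

/-- The shadow `S^a_b = {w : m a w b = b}` (i.e. `b ∈ [a,w]`). -/
def shadow (M : MedianAlgebra X) (a b : X) : Set X := {w | M.m a w b = b}

/-- The branch `B^a_b = {w : m a w b ≠ b}`, complement of the shadow. -/
def branch (M : MedianAlgebra X) (a b : X) : Set X := {w | M.m a w b ≠ b}

/-- The relation `x ≤_u y` iff `m u x y = x`. -/
def leI (M : MedianAlgebra X) (u x y : X) : Prop := M.m u x y = x

/-- `[u,v]` is a chain interval: `≤_u` is total on `[u,v]` and the
order-median induced by `≤_u` agrees with `m` on `[u,v]`. -/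
def IsChainInterval (M : MedianAlgebra X) (u v : X) : Prop :=
  (∀ x ∈ M.interval u v, ∀ y ∈ M.interval u v, M.leI u x y ∨ M.leI u y x) ∧
  (∀ x ∈ M.interval u v, ∀ y ∈ M.interval u v, ∀ z ∈ M.interval u v,
      M.leI u x y → M.leI u y z → M.m x y z = y)

end MedianAlgebra

/-!
Write `p = m x y z`. By (M3), `p ∈ [x, y]`, so by symmetry of `m` it lies in all three intervals. Conversely, a
common point `w` of the three intervals lies in `[p, x]` and in `[p, y]` (one instance of (M3)
each), and since `p ∈ [x, y]`, a further instance of (M3) forces `w = p`.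
-/

namespace MedianAlgebra

variable {X : Type*} (M : MedianAlgebra X) {a b c p w : X}

theorem swap13 (a b c : X) : M.m a b c = M.m c b a := by
  rw [M.swap12, M.swap23, M.swap12]

theorem rotate (a b c : X) : M.m a b c = M.m b c a := by
  rw [M.swap12, M.swap23]

theorem absorb_outer (a b : X) : M.m a b a = a := by
  rw [M.swap12, M.absorb]

theorem mem_interval : c ∈ M.interval a b ↔ M.m a c b = c := Iff.rfl

theorem interval_comm (a b : X) : M.interval a b = M.interval b a := by
  ext c
  rw [mem_interval, mem_interval, swap13]

theorem median_mem_interval (a b c : X) : M.m a b c ∈ M.interval a b := by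
  rw [mem_interval, M.swap12 a (M.m a b c) b, M.swap23 a b c, M.med_assoc, M.swap13 a a b,
    M.absorb, M.swap23]

variable {M}

theorem mem_interval_median_of_mem_of_mem (hab : w ∈ M.interval a b) (hbc : w ∈ M.interval b c) :
    w ∈ M.interval (M.m a b c) b := by
  rw [mem_interval] at *
  rw [← M.rotate c a b, M.med_assoc, M.swap13 c w b, hbc, M.swap12, hab]

theorem eq_of_mem_interval_of_mem_interval (hp : p ∈ M.interval a b)
    (ha : w ∈ M.interval p a) (hb : w ∈ M.interval p b) : w = p := by
  rw [mem_interval] at *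
  have key := M.med_assoc a b w p
  rwa [M.swap23 a b p, hp, M.swap13 a w p, ha, M.swap13 w b p, M.swap23 p b w, hb,
    M.absorb_outer, eq_comm] at key

end MedianAlgebra

open MedianAlgebra

/-- The three intervals of a triple intersect exactly in the median. -/
theorem median_interval_intersection {X : Type*} (M : MedianAlgebra X) (x y z : X) :
    M.interval x y ∩ M.interval y z ∩ M.interval x z = {M.m x y z} := by
  have hyz : M.m x y z ∈ M.interval y z := M.rotate x y z ▸ M.median_mem_interval y z x
  have hxz : M.m x y z ∈ M.interval x z := M.swap23 x y z ▸ M.median_mem_interval x z y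
  ext w
  constructor
  · rintro ⟨⟨hwxy, hwyz⟩, hwxz⟩
    have hwy : w ∈ M.interval (M.m x y z) y := mem_interval_median_of_mem_of_mem hwxy hwyz
    have hwx : w ∈ M.interval (M.m x y z) x := by
      rw [M.swap12 x y z]
      exact mem_interval_median_of_mem_of_mem (M.interval_comm x y ▸ hwxy) hwxz
    exact eq_of_mem_interval_of_mem_interval (M.median_mem_interval x y z) hwx hwy
  · rintro rfl
    exact ⟨⟨M.median_mem_interval x y z, hyz⟩, hxz⟩
end

section
/- Let X be a median algebra and let [x,y] be a chain interval ordered by ≤_x. If z ∈ [x,y] with z ≠ y, then the shadows coincide: S^x_y = S^z_y, i.e., for every w ∈ X, y ∈ [x,w] if and only if y ∈ [z,w]. Equivalently, B^x_y = B^z_y. -/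
open MedianAlgebra

/-!
For `z ∈ [x,y]` the median axiom gives `m z w y = m (m x w y) z y`, which yields `S^x_y ⊆ S^z_y`
at once. Conversely, if `m z w y = y` then `p := m x w y` and `z` are two points of the chain
`[x,y]` with `m p z y = y`; in a chain the median of three points is the middle one, so
`p = y` or `z = y`, and `z ≠ y` leaves `p = y`, i.e. `w ∈ S^x_y`.
-/

namespace MedianAlgebra

variable {X : Type*} (M : MedianAlgebra X)

theorem m_self_left (a b : X) : M.m a a b = a := by
  rw [M.swap23, M.swap12, M.absorb]

theorem m_mem_interval (a w b : X) : M.m a w b ∈ M.interval a b := by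
  show M.m a (M.m a w b) b = M.m a w b
  rw [M.swap12 a, M.med_assoc, M.m_self_left]

theorem branch_eq_compl_shadow (a b : X) : M.branch a b = (M.shadow a b)ᶜ := rfl

variable {M}

theorem m_eq_m_m_of_mem_interval {x y z : X} (hz : z ∈ M.interval x y) (w : X) :
    M.m z w y = M.m (M.m x w y) z y := by
  have h : M.m x z y = z := hz
  rw [← M.med_assoc, h]

theorem shadow_subset_shadow_of_mem_interval {x y z : X} (hz : z ∈ M.interval x y) :
    M.shadow x y ⊆ M.shadow z y := by
  intro w (hw : M.m x w y = y)
  show M.m z w y = y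
  rw [m_eq_m_m_of_mem_interval hz, hw, M.swap12, M.absorb]

theorem IsChainInterval.eq_or_eq_of_m_eq {x y p z : X} (hch : M.IsChainInterval x y)
    (hp : p ∈ M.interval x y) (hz : z ∈ M.interval x y) (h : M.m p z y = y) :
    p = y ∨ z = y := by
  have hy : y ∈ M.interval x y := M.absorb x y
  rcases hch.1 p hp z hz with hpz | hzp
  · exact Or.inr ((hch.2 p hp z hz y hy hpz hz).symm.trans h)
  · rw [M.swap12] at h
    exact Or.inl ((hch.2 z hz p hp y hy hzp hp).symm.trans h)

theorem IsChainInterval.shadow_subset_shadow {x y z : X} (hch : M.IsChainInterval x y)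
    (hz : z ∈ M.interval x y) (hzy : z ≠ y) : M.shadow z y ⊆ M.shadow x y := by
  intro w (hw : M.m z w y = y)
  rw [m_eq_m_m_of_mem_interval hz] at hw
  exact (hch.eq_or_eq_of_m_eq (M.m_mem_interval x w y) hz hw).resolve_right hzy

end MedianAlgebra

/-- Branch equivalence: if `[x,y]` is a chain interval and `z ∈ [x,y)`, then
the shadows and branches from the pair `(x,y)` and `(z,y)` coincide. -/
theorem branch_equivalence {X : Type*} (M : MedianAlgebra X) (x y z : X)
    (hch : M.IsChainInterval x y) (hz : z ∈ M.interval x y) (hzy : z ≠ y) :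
    M.shadow x y = M.shadow z y ∧ M.branch x y = M.branch z y := by
  have hshadow : M.shadow x y = M.shadow z y :=
    (shadow_subset_shadow_of_mem_interval hz).antisymm (hch.shadow_subset_shadow hz hzy)
  refine ⟨hshadow, ?_⟩
  rw [branch_eq_compl_shadow, branch_eq_compl_shadow, hshadow]
end
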